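/- arXiv:1610.00022 — 2 statements merged into one kernel-verified Lean document; each statement's English description precedes it below -/
import Mathlib

section
/- Let Λ be a measurable space, μ a probability measure on Λ, d a natural number, and for each i ∈ Fin d let 𝒩ᵢ be a set of probability measures on Λ and fᵢ : Λ → ℝ a measurable function with 0 ≤ fᵢ(λ) and Σ_{i} fᵢ(λ) = 1 for every λ ∈ Λ. Suppose ∫ fᵢ dν = 1 for every i ∈ Fin d and every ν ∈ 𝒩ᵢ. Then for every measurable Ω ⊆ Λ such that ν(Ω) = 1 for every ν ∈ ⋃_i 𝒩ᵢ, one has (μ Ω).toReal ≥ Σ_{i} ϖ(𝒩ᵢ | μ). -/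
/-!
Let `Aᵢ = {fᵢ = 1}`. Since `0 ≤ fᵢ ≤ 1` and `∫ fᵢ dν = 1` for a probability measure `ν ∈ 𝒩ᵢ`,
`fᵢ = 1` holds `ν`-a.e., so `Ω ∩ Aᵢ` is admissible for `ϖ(𝒩ᵢ|μ)`. Because `∑ᵢ fᵢ = 1`, no
point lies in two of the `Aᵢ`, hence `∑ᵢ ϖ(𝒩ᵢ|μ) ≤ ∑ᵢ μ (Ω ∩ Aᵢ) ≤ μ Ω`.
-/

open MeasureTheory

/-- The asymmetric overlap `ϖ(𝒩|μ)`: the infimum of `μ Ω` over measurable sets `Ω`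
that have full measure for every measure in `𝒩`. -/
noncomputable def asymmetricOverlap {Λ : Type*} [MeasurableSpace Λ]
    (N : Set (Measure Λ)) (μ : Measure Λ) : ℝ :=
  sInf { x : ℝ | ∃ Ω : Set Λ, MeasurableSet Ω ∧ (∀ ν ∈ N, ν Ω = 1) ∧ x = (μ Ω).toReal }

open Function

section FiniteSumEqOne

variable {ι : Type*} [Fintype ι] {a : ι → ℝ}

lemma le_one_of_sum_eq_one (h0 : ∀ i, 0 ≤ a i) (hsum : ∑ i, a i = 1) (i : ι) : a i ≤ 1 :=
  hsum ▸ Finset.single_le_sum (fun j _ => h0 j) (Finset.mem_univ i)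

lemma eq_of_sum_eq_one_of_eq_one (h0 : ∀ i, 0 ≤ a i) (hsum : ∑ i, a i = 1) {i j : ι}
    (hi : a i = 1) (hj : a j = 1) : i = j := by
  classical
  by_contra hij
  have hpair : a i + a j ≤ ∑ k, a k := by
    simpa [Finset.sum_pair hij] using
      Finset.sum_le_sum_of_subset_of_nonneg (Finset.subset_univ {i, j}) fun k _ _ => h0 k
  linarith

lemma pairwise_disjoint_level_one_of_sum_eq_one {α : Type*} {f : ι → α → ℝ}
    (h0 : ∀ i x, 0 ≤ f i x) (hsum : ∀ x, ∑ i, f i x = 1) :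
    Pairwise (Disjoint on fun i => {x | f i x = 1}) := fun _ _ hij =>
  Set.disjoint_left.2 fun x hi hj =>
    hij (eq_of_sum_eq_one_of_eq_one (h0 · x) (hsum x) hi hj)

end FiniteSumEqOne

lemma ae_eq_one_of_integral_eq_one {α : Type*} [MeasurableSpace α] {ν : Measure α}
    [IsProbabilityMeasure ν] {g : α → ℝ} (hg : Integrable g ν) (hle : ∀ᵐ x ∂ν, g x ≤ 1)
    (hint : ∫ x, g x ∂ν = 1) : ∀ᵐ x ∂ν, g x = 1 := by
  have hzero : ∫ x, (1 - g x) ∂ν = 0 := by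
    rw [integral_sub (integrable_const 1) hg, hint]
    simp
  have hnonneg : 0 ≤ᵐ[ν] fun x => 1 - g x := hle.mono fun x hx => sub_nonneg.2 hx
  filter_upwards [(integral_eq_zero_iff_of_nonneg_ae hnonneg
    ((integrable_const 1).sub hg)).1 hzero] with x hx
  exact (sub_eq_zero.1 hx).symm

lemma asymmetricOverlap_le {Λ : Type*} [MeasurableSpace Λ] {N : Set (Measure Λ)}
    (μ : Measure Λ) {Ω : Set Λ} (hΩ : MeasurableSet Ω) (hfull : ∀ ν ∈ N, ν Ω = 1) :
    asymmetricOverlap N μ ≤ μ.real Ω :=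
  csInf_le ⟨0, by rintro x ⟨S, -, -, rfl⟩; exact ENNReal.toReal_nonneg⟩ ⟨Ω, hΩ, hfull, rfl⟩

theorem basis_overlaps_add_up {Λ : Type*} [MeasurableSpace Λ]
    (μ : Measure Λ) [IsProbabilityMeasure μ]
    (d : ℕ) (N : Fin d → Set (Measure Λ))
    (hN : ∀ i : Fin d, ∀ ν ∈ N i, IsProbabilityMeasure ν)
    (f : Fin d → Λ → ℝ) (hfm : ∀ i : Fin d, Measurable (f i))
    (hf0 : ∀ i : Fin d, ∀ x : Λ, 0 ≤ f i x)
    (hfsum : ∀ x : Λ, ∑ i : Fin d, f i x = 1)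
    (hint : ∀ i : Fin d, ∀ ν ∈ N i, ∫ x, f i x ∂ν = 1) :
    ∀ Ω : Set Λ, MeasurableSet Ω → (∀ ν ∈ ⋃ i : Fin d, N i, ν Ω = 1) →
      (μ Ω).toReal ≥ ∑ i : Fin d, asymmetricOverlap (N i) μ := by
  intro Ω hΩ hΩfull
  set A : Fin d → Set Λ := fun i => {x | f i x = 1}
  have hA : ∀ i, MeasurableSet (Ω ∩ A i) := fun i =>
    hΩ.inter (hfm i (measurableSet_singleton 1))
  have hf1 : ∀ i x, f i x ≤ 1 := fun i x => le_one_of_sum_eq_one (hf0 · x) (hfsum x) i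
  have hfull : ∀ i, ∀ ν ∈ N i, ν (Ω ∩ A i) = 1 := by
    intro i ν hν
    have := hN i ν hν
    have hfi : Integrable (f i) ν := Integrable.of_bound (hfm i).aestronglyMeasurable 1
      (.of_forall fun x => by simpa [abs_of_nonneg (hf0 i x)] using hf1 i x)
    have hAi : ν (A i)ᶜ = 0 :=
      ae_iff.1 (ae_eq_one_of_integral_eq_one hfi (.of_forall (hf1 i)) (hint i ν hν))
    rw [measure_inter_conull hAi, hΩfull ν (Set.mem_iUnion_of_mem i hν)]
  have hdisj : Pairwise (Disjoint on fun i => Ω ∩ A i) := fun i j hij =>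
    ((pairwise_disjoint_level_one_of_sum_eq_one hf0 hfsum hij).mono
      Set.inter_subset_right Set.inter_subset_right)
  calc ∑ i, asymmetricOverlap (N i) μ
      ≤ ∑ i, μ.real (Ω ∩ A i) :=
        Finset.sum_le_sum fun i _ => asymmetricOverlap_le μ (hA i) (hfull i)
    _ = μ.real (⋃ i, Ω ∩ A i) := (measureReal_iUnion_fintype hdisj hA).symm
    _ ≤ μ.real Ω := measureReal_mono (Set.iUnion_subset fun i => Set.inter_subset_left)
end

section
/- Let Λ be a measurable space, μ a probability measure on Λ, and 𝒩, 𝒳 two sets of probability measures on Λ. Let f, g : Λ → ℝ be measurable functions with 0 ≤ f(λ), 0 ≤ g(λ) and f(λ) + g(λ) ≤ 1 for every λ ∈ Λ. Suppose ∫ (f + g) dν = 1 for every ν ∈ 𝒩, ∫ f dχ = 1 for every χ ∈ 𝒳, and ∫ g dμ = 0. Then ϖ(𝒩 ∪ 𝒳 | μ) ≤ ∫ f dμ. -/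
/-!
Take `Ω = {f ≥ 1} ∪ {g ≠ 0}`. A function bounded by `1` with integral `1` against a probability
measure equals `1` almost surely, so every `ν ∈ 𝒩` lives on `{f + g = 1} ⊆ Ω` and every `χ ∈ 𝒳`
on `{f = 1} ⊆ Ω`. On the other side `∫ g dμ = 0` makes `{g ≠ 0}` a `μ`-null set, and Markov's
inequality bounds `μ {f ≥ 1}` by `∫ f dμ`.
-/

open MeasureTheory Filter

section

variable {Λ : Type*} [MeasurableSpace Λ]

theorem asymmetricOverlap_le_measureReal {N : Set (Measure Λ)} (μ : Measure Λ) {Ω : Set Λ}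
    (hΩ : MeasurableSet Ω) (hN : ∀ ν ∈ N, ν Ω = 1) : asymmetricOverlap N μ ≤ μ.real Ω :=
  csInf_le ⟨0, by rintro _ ⟨_, _, _, rfl⟩; exact ENNReal.toReal_nonneg⟩ ⟨Ω, hΩ, hN, rfl⟩

/-- Integrability comes for free: a non-integrable function has integral `0 ≠ 1`. -/
theorem ae_eq_one_of_integral_eq_one_s8 {ν : Measure Λ} [IsProbabilityMeasure ν] {h : Λ → ℝ}
    (h1 : ∀ᵐ x ∂ν, h x ≤ 1) (hint : ∫ x, h x ∂ν = 1) : ∀ᵐ x ∂ν, h x = 1 :=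
  (integral_eq_iff_of_ae_le (.of_integral_ne_zero (hint ▸ one_ne_zero)) (integrable_const 1)
    h1).1 (by simpa using hint)

theorem integrable_of_nonneg_of_le_one {μ : Measure Λ} [IsFiniteMeasure μ] {h : Λ → ℝ}
    (hm : Measurable h) (h0 : ∀ x, 0 ≤ h x) (h1 : ∀ x, h x ≤ 1) : Integrable h μ :=
  .of_bound hm.aestronglyMeasurable 1 <| ae_of_all _ fun x ↦ by
    rw [Real.norm_of_nonneg (h0 x)]; exact h1 x

theorem measureReal_ne_zero_eq_zero_of_integral_eq_zero {μ : Measure Λ} {g : Λ → ℝ}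
    (hg0 : ∀ x, 0 ≤ g x) (hgi : Integrable g μ) (hint : ∫ x, g x ∂μ = 0) :
    μ.real {x | g x ≠ 0} = 0 := by
  have hg : g =ᵐ[μ] 0 := (integral_eq_zero_iff_of_nonneg hg0 hgi).1 hint
  exact ENNReal.toReal_eq_zero_iff _ |>.2 (.inl (ae_iff.1 hg))

end

theorem tripartite_overlap_le_quantum_prob {Λ : Type*} [MeasurableSpace Λ]
    (μ : Measure Λ) [IsProbabilityMeasure μ]
    (N X : Set (Measure Λ))
    (hN : ∀ ν ∈ N, IsProbabilityMeasure ν) (hX : ∀ χ ∈ X, IsProbabilityMeasure χ)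
    (f g : Λ → ℝ) (hfm : Measurable f) (hgm : Measurable g)
    (hf0 : ∀ x : Λ, 0 ≤ f x) (hg0 : ∀ x : Λ, 0 ≤ g x)
    (hfg1 : ∀ x : Λ, f x + g x ≤ 1)
    (hN1 : ∀ ν ∈ N, ∫ x, f x + g x ∂ν = 1)
    (hX1 : ∀ χ ∈ X, ∫ x, f x ∂χ = 1)
    (hμ0 : ∫ x, g x ∂μ = 0) :
    asymmetricOverlap (N ∪ X) μ ≤ ∫ x, f x ∂μ := by
  have hf1 (x : Λ) : f x ≤ 1 := by linarith [hfg1 x, hg0 x]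
  have hg1 (x : Λ) : g x ≤ 1 := by linarith [hfg1 x, hf0 x]
  set Ω := {x | 1 ≤ f x} ∪ {x | g x ≠ 0}
  have hΩ : MeasurableSet Ω :=
    (measurableSet_le measurable_const hfm).union (hgm (measurableSet_singleton 0)).compl
  have hfull : ∀ ν ∈ N ∪ X, ν Ω = 1 := by
    rintro ν (hν | hν)
    · have := hN ν hν
      refine (mem_ae_iff_prob_eq_one hΩ).1 ?_
      filter_upwards [ae_eq_one_of_integral_eq_one_s8 (ae_of_all _ hfg1) (hN1 ν hν)] with x hx
      by_cases hgx : g x = 0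
      · exact Or.inl (show 1 ≤ f x by linarith)
      · exact Or.inr hgx
    · have := hX ν hν
      refine (mem_ae_iff_prob_eq_one hΩ).1 ?_
      filter_upwards [ae_eq_one_of_integral_eq_one_s8 (ae_of_all _ hf1) (hX1 ν hν)] with x hx
      exact Or.inl hx.ge
  have hmarkov := mul_meas_ge_le_integral_of_nonneg (ae_of_all _ hf0)
    (integrable_of_nonneg_of_le_one (μ := μ) hfm hf0 hf1) 1
  have hg_null := measureReal_ne_zero_eq_zero_of_integral_eq_zero hg0
    (integrable_of_nonneg_of_le_one hgm hg0 hg1) hμ0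
  calc asymmetricOverlap (N ∪ X) μ ≤ μ.real Ω := asymmetricOverlap_le_measureReal μ hΩ hfull
    _ ≤ μ.real {x | 1 ≤ f x} + μ.real {x | g x ≠ 0} := measureReal_union_le _ _
    _ ≤ ∫ x, f x ∂μ := by
      rwa [hg_null, add_zero, ← one_mul (μ.real _)]
end
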